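/- arXiv:1912.09213 — 4 statements merged into one kernel-verified Lean document; each statement's English description precedes it below -/
import Mathlib

section
/- Let b : ℝ^d → ℝ^d be a C¹ ℤ^d-periodic vector field with flow X(t,x), and let μ be a Borel probability measure on the torus Y_d. Then μ is invariant for the flow if and only if ∫_{Y_d} b(y)·∇ψ(y) dμ(y) = 0 for every C¹ ℤ^d-periodic function ψ : ℝ^d → ℝ. -/
open MeasureTheory Filter Topology
open scoped RealInnerProductSpace

noncomputable section

/-- An integer vector `k ∈ ℤ^d` seen as a point of `ℝ^d`. -/
def intVec (d : ℕ) (k : Fin d → ℤ) : EuclideanSpace ℝ (Fin d) := WithLp.toLp 2 (fun i => (k i : ℝ))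

/-- A function on `ℝ^d` is `ℤ^d`-periodic. -/
def IsZdPeriodic {α : Type*} (d : ℕ) (f : EuclideanSpace ℝ (Fin d) → α) : Prop :=
  ∀ (x : EuclideanSpace ℝ (Fin d)) (k : Fin d → ℤ), f (x + intVec d k) = f x

/-- The unit cube `[0,1)^d`, a fundamental domain for the torus `Y_d = ℝ^d/ℤ^d`. -/
def unitCube (d : ℕ) : Set (EuclideanSpace ℝ (Fin d)) :=
  {x | ∀ i, x i ∈ Set.Ico (0 : ℝ) 1}

/-- A Borel probability measure on the torus `Y_d`, identified with a Borel probability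
measure on `ℝ^d` carried by the fundamental domain `[0,1)^d`. -/
def IsTorusMeasure {d : ℕ} (μ : Measure (EuclideanSpace ℝ (Fin d))) : Prop :=
  IsProbabilityMeasure μ ∧ μ (unitCube d)ᶜ = 0

/-- A measure on the torus is invariant for the flow `X` if
`∫ φ(X(t,y)) dμ(y) = ∫ φ dμ` for all `t` and all continuous `ℤ^d`-periodic `φ`. -/
def IsInvariantMeasure {d : ℕ} (X : ℝ → EuclideanSpace ℝ (Fin d) → EuclideanSpace ℝ (Fin d))
    (μ : Measure (EuclideanSpace ℝ (Fin d))) : Prop :=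
  ∀ (t : ℝ) (φ : EuclideanSpace ℝ (Fin d) → ℝ), Continuous φ → IsZdPeriodic d φ →
    ∫ y, φ (X t y) ∂μ = ∫ y, φ y ∂μ

/-!
The derivative of `s ↦ ∫ ψ (X s y) dμ` is `∫ (b·∇ψ)(X s y) dμ`; at `s = 0` this gives the forward
direction. Conversely, that derivative is formally `∫ b·∇(ψ ∘ X s) dμ`, but `ψ ∘ X s` is only known
to be Lipschitz. Mollifying it with a bump `ρ` of radius `r` gives a `C¹` periodic `χ` with
`|b·∇χ - ρ ⋆ ((b·∇ψ) ∘ X s)| ≤ C r`, since `X h y - z` and `X h (y - z)` differ by `O(|z| |h|)`;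
letting `r → 0` shows the derivative vanishes. So the integrals of `C¹` periodic test functions are
invariant, and continuous ones follow by mollification and dominated convergence.
-/

open Set Metric ContinuousLinearMap
open scoped NNReal Convolution

namespace IsZdPeriodic

variable {d : ℕ}

theorem exists_norm_le {F : Type*} [NormedAddCommGroup F] {f : EuclideanSpace ℝ (Fin d) → F}
    (hper : IsZdPeriodic d f) (hf : Continuous f) : ∃ C, ∀ x, ‖f x‖ ≤ C := by
  have hcube : IsCompact
      (WithLp.toLp 2 '' Icc (0 : Fin d → ℝ) 1 : Set (EuclideanSpace ℝ (Fin d))) :=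
    isCompact_Icc.image (PiLp.continuous_toLp 2 _)
  obtain ⟨C, hC⟩ := hcube.exists_bound_of_continuousOn hf.continuousOn
  refine ⟨C, fun x => ?_⟩
  have hx : x = WithLp.toLp 2 (fun i => Int.fract (x i)) + intVec d (fun i => ⌊x i⌋) := by
    ext i
    simp [intVec, Int.fract_add_floor]
  rw [hx, hper]
  exact hC _ ⟨_, ⟨fun i => Int.fract_nonneg _, fun i => (Int.fract_lt_one _).le⟩, rfl⟩

theorem integrable {F : Type*} [NormedAddCommGroup F] {f : EuclideanSpace ℝ (Fin d) → F}
    {μ : Measure (EuclideanSpace ℝ (Fin d))} [IsFiniteMeasure μ]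
    (hper : IsZdPeriodic d f) (hf : Continuous f) : Integrable f μ :=
  have ⟨C, hC⟩ := hper.exists_norm_le hf
  .of_bound hf.aestronglyMeasurable C (.of_forall hC)

theorem fderiv {F : Type*} [NormedAddCommGroup F] [NormedSpace ℝ F]
    {f : EuclideanSpace ℝ (Fin d) → F} (hper : IsZdPeriodic d f) :
    IsZdPeriodic d (_root_.fderiv ℝ f) := fun x k => by
  rw [← fderiv_comp_add_right]
  simp only [fun y => hper y k]

theorem fderiv_apply {ψ : EuclideanSpace ℝ (Fin d) → ℝ}
    {v : EuclideanSpace ℝ (Fin d) → EuclideanSpace ℝ (Fin d)} (hψper : IsZdPeriodic d ψ)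
    (hvper : IsZdPeriodic d v) : IsZdPeriodic d (fun x => _root_.fderiv ℝ ψ x (v x)) :=
  fun x k => by simp only [hψper.fderiv x k, hvper x k]

theorem exists_lipschitzWith {F : Type*} [NormedAddCommGroup F] [NormedSpace ℝ F]
    {f : EuclideanSpace ℝ (Fin d) → F} (hper : IsZdPeriodic d f) (hf : ContDiff ℝ 1 f) :
    ∃ K, LipschitzWith K f := by
  obtain ⟨C, hC⟩ := hper.fderiv.exists_norm_le (hf.continuous_fderiv one_ne_zero)
  refine ⟨C.toNNReal, lipschitzWith_of_nnnorm_fderiv_le (hf.differentiable one_ne_zero)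
    fun x => ?_⟩
  rw [← NNReal.coe_le_coe, coe_nnnorm]
  exact (hC x).trans (Real.le_coe_toNNReal C)

theorem convolution {𝕜 E E' F : Type*} [NontriviallyNormedField 𝕜] [NormedAddCommGroup E]
    [NormedAddCommGroup E'] [NormedAddCommGroup F] [NormedSpace 𝕜 E] [NormedSpace 𝕜 E']
    [NormedSpace 𝕜 F] [NormedSpace ℝ F] {g : EuclideanSpace ℝ (Fin d) → E'}
    (hper : IsZdPeriodic d g) (f : EuclideanSpace ℝ (Fin d) → E) (L : E →L[𝕜] E' →L[𝕜] F)
    (μ : Measure (EuclideanSpace ℝ (Fin d))) : IsZdPeriodic d (f ⋆[L, μ] g) := fun x k => by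
  simp only [convolution_def, add_sub_right_comm, fun y => hper y k]

end IsZdPeriodic

structure IsFlow {E : Type*} [NormedAddCommGroup E] [NormedSpace ℝ E] (v : E → E)
    (X : ℝ → E → E) : Prop where
  zero : ∀ x, X 0 x = x
  hasDerivAt : ∀ x t, HasDerivAt (fun s => X s x) (v (X t x)) t

namespace IsFlow

variable {E : Type*} [NormedAddCommGroup E] [NormedSpace ℝ E] {v : E → E} {X : ℝ → E → E}
  {K : ℝ≥0}

theorem reverse (hX : IsFlow v X) : IsFlow (fun x => -v x) (fun t => X (-t)) where
  zero x := by simp [hX.zero]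
  hasDerivAt x t := by
    simpa [Function.comp_def] using (hX.hasDerivAt x (-t)).scomp t (hasDerivAt_neg t)

theorem continuous_curve (hX : IsFlow v X) (x : E) : Continuous (fun t => X t x) :=
  continuous_iff_continuousAt.2 fun t => (hX.hasDerivAt x t).continuousAt

theorem hasDerivAt_comp {F : Type*} [NormedAddCommGroup F] [NormedSpace ℝ F] (hX : IsFlow v X)
    {ψ : E → F} (hψ : Differentiable ℝ ψ) (x : E) (t : ℝ) :
    HasDerivAt (fun s => ψ (X s x)) (fderiv ℝ ψ (X t x) (v (X t x))) t :=
  (hψ _).hasFDerivAt.comp_hasDerivAt t (hX.hasDerivAt x t)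

theorem eq_of_hasDerivAt (hX : IsFlow v X) (hv : LipschitzWith K v) {f : ℝ → E}
    (hf : ∀ t, HasDerivAt f (v (f t)) t) (t : ℝ) : f t = X t (f 0) :=
  congrFun (ODE_solution_unique_univ (v := fun _ => v) (s := fun _ => univ) (t₀ := 0)
    (fun _ => hv.lipschitzOnWith) (fun t => ⟨hf t, trivial⟩)
    (fun t => ⟨hX.hasDerivAt (f 0) t, trivial⟩) (hX.zero _).symm) t

theorem add (hX : IsFlow v X) (hv : LipschitzWith K v) (t s : ℝ) (x : E) :
    X (t + s) x = X t (X s x) := by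
  simpa using hX.eq_of_hasDerivAt hv (f := fun u => X (u + s) x)
    (fun u => (hX.hasDerivAt x (u + s)).comp_add_const u s) t

theorem add_const (hX : IsFlow v X) (hv : LipschitzWith K v) {a : E} (hva : ∀ y, v (y + a) = v y)
    (t : ℝ) (x : E) : X t (x + a) = X t x + a := by
  simpa [hX.zero] using (hX.eq_of_hasDerivAt hv (f := fun u => X u x + a)
    (fun u => by simpa [hva] using (hX.hasDerivAt x u).add_const a) t).symm

theorem dist_le_of_nonneg (hX : IsFlow v X) (hv : LipschitzWith K v) {t : ℝ} (ht : 0 ≤ t)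
    (x y : E) : dist (X t x) (X t y) ≤ dist x y * Real.exp (K * t) := by
  simpa using dist_le_of_trajectories_ODE (v := fun _ => v) (fun _ => hv)
    (hX.continuous_curve x).continuousOn (fun u _ => (hX.hasDerivAt x u).hasDerivWithinAt)
    (hX.continuous_curve y).continuousOn (fun u _ => (hX.hasDerivAt y u).hasDerivWithinAt)
    (by rw [hX.zero, hX.zero]) t ⟨ht, le_rfl⟩

theorem dist_le (hX : IsFlow v X) (hv : LipschitzWith K v) (t : ℝ) (x y : E) :
    dist (X t x) (X t y) ≤ dist x y * Real.exp (K * |t|) := by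
  rcases le_total 0 t with ht | ht
  · simpa [abs_of_nonneg ht] using hX.dist_le_of_nonneg hv ht x y
  · have hv' : LipschitzWith K (fun x => -v x) :=
      .of_dist_le_mul fun x y => by simpa only [dist_neg_neg] using hv.dist_le_mul x y
    simpa [abs_of_nonpos ht] using hX.reverse.dist_le_of_nonneg hv' (neg_nonneg.2 ht) x y

theorem lipschitzWith (hX : IsFlow v X) (hv : LipschitzWith K v) (t : ℝ) :
    LipschitzWith (Real.exp (K * |t|)).toNNReal (X t) :=
  .of_dist_le_mul fun x y => by
    rw [Real.coe_toNNReal _ (Real.exp_pos _).le, mul_comm]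
    exact hX.dist_le hv t x y

theorem continuous (hX : IsFlow v X) (hv : LipschitzWith K v) (t : ℝ) : Continuous (X t) :=
  (hX.lipschitzWith hv t).continuous

theorem norm_sub_sub_le (hX : IsFlow v X) (hv : LipschitzWith K v) {h : ℝ} (hh : |h| ≤ 1)
    (y y' : E) : ‖X h y - X h y' - (y - y')‖ ≤ K * Real.exp K * ‖y - y'‖ * |h| := by
  have hbound : ∀ u ∈ Icc (-1 : ℝ) 1,
      ‖v (X u y) - v (X u y')‖ ≤ K * Real.exp K * ‖y - y'‖ := by
    intro u hu
    have hKu : (K : ℝ) * |u| ≤ K := mul_le_of_le_one_right K.2 (abs_le.2 hu)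
    rw [← dist_eq_norm, ← dist_eq_norm]
    calc dist (v (X u y)) (v (X u y')) ≤ K * dist (X u y) (X u y') := hv.dist_le_mul _ _
      _ ≤ K * (dist y y' * Real.exp (K * |u|)) := by gcongr; exact hX.dist_le hv u y y'
      _ ≤ K * (dist y y' * Real.exp K) := by gcongr
      _ = K * Real.exp K * dist y y' := by ring
  simpa [hX.zero] using (convex_Icc (-1 : ℝ) 1).norm_image_sub_le_of_norm_hasDerivWithin_le
    (fun u _ => ((hX.hasDerivAt y u).sub (hX.hasDerivAt y' u)).hasDerivWithinAt) hbound
    (x := 0) (y := h) ⟨by norm_num, by norm_num⟩ (abs_le.1 hh)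

end IsFlow

def bumpSeq (E : Type*) [NormedAddCommGroup E] [NormedSpace ℝ E] (n : ℕ) : ContDiffBump (0 : E) :=
  ⟨1 / ((n : ℝ) + 1) / 2, 1 / ((n : ℝ) + 1), by positivity, half_lt_self (by positivity)⟩

theorem tendsto_bumpSeq_rOut (E : Type*) [NormedAddCommGroup E] [NormedSpace ℝ E] :
    Tendsto (fun n => (bumpSeq E n).rOut) atTop (𝓝 0) :=
  tendsto_one_div_add_atTop_nhds_zero_nat

section Mollifier

variable {E : Type*} [NormedAddCommGroup E] [NormedSpace ℝ E] [FiniteDimensional ℝ E]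
  [MeasurableSpace E] [BorelSpace E] {ν : Measure E} [ν.IsAddHaarMeasure]

namespace ContDiffBump

variable (φ : ContDiffBump (0 : E))

theorem norm_normed_convolution_le {Φ : E → ℝ} {C : ℝ} (hC : ∀ x, ‖Φ x‖ ≤ C) (x : E) :
    ‖(φ.normed ν ⋆[lsmul ℝ ℝ, ν] Φ) x‖ ≤ C := by
  rw [convolution_def]
  refine (norm_integral_le_of_norm_le (φ.integrable_normed.mul_const C)
    (.of_forall fun z => ?_)).trans_eq (by rw [integral_mul_const, φ.integral_normed, one_mul])
  rw [lsmul_apply, norm_smul, Real.norm_of_nonneg (φ.nonneg_normed z)]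
  exact mul_le_mul_of_nonneg_left (hC _) (φ.nonneg_normed z)

theorem contDiff_normed_convolution {Φ : E → ℝ} (hΦ : Continuous Φ) :
    ContDiff ℝ 1 (φ.normed ν ⋆[lsmul ℝ ℝ, ν] Φ) :=
  φ.hasCompactSupport_normed.contDiff_convolution_left _ φ.contDiff_normed hΦ.locallyIntegrable

theorem integrable_normed_smul {g : E → ℝ} (hg : Continuous g) :
    Integrable (fun z => φ.normed ν z • g z) ν :=
  (φ.continuous_normed.smul hg).integrable_of_hasCompactSupport
    φ.hasCompactSupport_normed.smul_right

end ContDiffBump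

theorem tendsto_integral_bumpSeq_convolution_comp {α : Type*} [MeasurableSpace α]
    {μ : Measure α} [IsFiniteMeasure μ] {Φ : E → ℝ} {C : ℝ} (hΦ : Continuous Φ)
    (hC : ∀ x, ‖Φ x‖ ≤ C) {g : α → E} (hg : AEMeasurable g μ) :
    Tendsto (fun n => ∫ a, ((bumpSeq E n).normed ν ⋆[lsmul ℝ ℝ, ν] Φ) (g a) ∂μ) atTop
      (𝓝 (∫ a, Φ (g a) ∂μ)) :=
  tendsto_integral_of_dominated_convergence (fun _ => C)
    (fun n => ((bumpSeq E n).contDiff_normed_convolution hΦ).continuous.measurable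
      |>.comp_aemeasurable hg |>.aestronglyMeasurable)
    (integrable_const C)
    (fun n => .of_forall fun a => (bumpSeq E n).norm_normed_convolution_le hC (g a))
    (.of_forall fun a =>
      ContDiffBump.convolution_tendsto_right_of_continuous (tendsto_bumpSeq_rOut E) hΦ (g a))

namespace IsFlow

variable {v : E → E} {X : ℝ → E → E} {K L : ℝ≥0} (φ : ContDiffBump (0 : E))

theorem hasDerivAt_integral_normed_smul (hX : IsFlow v X) (hv : LipschitzWith K v)
    {Ψ Φ : E → ℝ} {C : ℝ} (hΨ : Continuous Ψ) (hΦ : Continuous Φ) (hC : ∀ x, ‖Φ x‖ ≤ C)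
    (hd : ∀ w h, HasDerivAt (fun u => Ψ (X u w)) (Φ (X h w)) h) (y : E) :
    HasDerivAt (fun h => ∫ z, φ.normed ν z • Ψ (X h (y - z)) ∂ν)
      ((φ.normed ν ⋆[lsmul ℝ ℝ, ν] Φ) y) 0 := by
  have hcomp : ∀ (f : E → ℝ), Continuous f → ∀ h, Continuous fun z => f (X h (y - z)) :=
    fun f hf h => hf.comp ((hX.continuous hv h).comp (continuous_const.sub continuous_id))
  rw [convolution_def]
  simpa [hX.zero] using (hasDerivAt_integral_of_dominated_loc_of_deriv_le (x₀ := 0) univ_mem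
    (F' := fun h z => φ.normed ν z • Φ (X h (y - z))) (bound := fun z => φ.normed ν z * C)
    (.of_forall fun h => (φ.integrable_normed_smul (hcomp Ψ hΨ h)).aestronglyMeasurable)
    (φ.integrable_normed_smul (hcomp Ψ hΨ 0))
    (φ.integrable_normed_smul (hcomp Φ hΦ 0)).aestronglyMeasurable
    (.of_forall fun z h _ => by
      rw [norm_smul, Real.norm_of_nonneg (φ.nonneg_normed z)]
      exact mul_le_mul_of_nonneg_left (hC _) (φ.nonneg_normed z))
    (φ.integrable_normed.mul_const C)
    (.of_forall fun z h _ => (hd (y - z) h).const_smul (φ.normed ν z))).2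

theorem norm_normed_convolution_comp_sub_le (hX : IsFlow v X) (hv : LipschitzWith K v)
    {Ψ : E → ℝ} (hΨ : LipschitzWith L Ψ) {h : ℝ} (hh : |h| ≤ 1) (y : E) :
    ‖(φ.normed ν ⋆[lsmul ℝ ℝ, ν] Ψ) (X h y) - ∫ z, φ.normed ν z • Ψ (X h (y - z)) ∂ν‖
      ≤ L * (K * Real.exp K) * φ.rOut * |h| := by
  have hint : ∀ f : E → E, Continuous f → Integrable (fun z => φ.normed ν z • Ψ (f z)) ν :=
    fun f hf => φ.integrable_normed_smul (hΨ.continuous.comp hf)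
  rw [convolution_def]
  simp only [lsmul_apply]
  rw [← integral_sub (hint (fun z => X h y - z) (by fun_prop))
    (hint (fun z => X h (y - z)) ((hX.continuous hv h).comp (by fun_prop)))]
  refine (norm_integral_le_of_norm_le (φ.integrable_normed.mul_const _) (.of_forall fun z => ?_)
    ).trans_eq (by rw [integral_mul_const, φ.integral_normed, one_mul])
  simp only [← smul_sub, norm_smul, Real.norm_of_nonneg (φ.nonneg_normed z)]
  rcases eq_or_ne (φ.normed ν z) 0 with hz | hz
  · simp [hz]
  have hz' : ‖z‖ ≤ φ.rOut :=
    (mem_ball_zero_iff.1 (φ.support_normed_eq (μ := ν) ▸ Function.mem_support.2 hz)).le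
  refine mul_le_mul_of_nonneg_left ?_ (φ.nonneg_normed z)
  calc ‖Ψ (X h y - z) - Ψ (X h (y - z))‖ ≤ L * ‖X h y - X h (y - z) - (y - (y - z))‖ := by
        simpa [dist_eq_norm, sub_right_comm] using hΨ.dist_le_mul (X h y - z) (X h (y - z))
    _ ≤ L * (K * Real.exp K * ‖y - (y - z)‖ * |h|) := by
        gcongr
        exact hX.norm_sub_sub_le hv hh _ _
    _ ≤ L * (K * Real.exp K * φ.rOut * |h|) := by
        rw [sub_sub_cancel]
        gcongr
    _ = L * (K * Real.exp K) * φ.rOut * |h| := by ring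

theorem norm_fderiv_normed_convolution_sub_le (hX : IsFlow v X) (hv : LipschitzWith K v)
    {Ψ Φ : E → ℝ} {C : ℝ} (hΨ : LipschitzWith L Ψ) (hΦ : Continuous Φ) (hC : ∀ x, ‖Φ x‖ ≤ C)
    (hd : ∀ w h, HasDerivAt (fun u => Ψ (X u w)) (Φ (X h w)) h) (y : E) :
    ‖fderiv ℝ (φ.normed ν ⋆[lsmul ℝ ℝ, ν] Ψ) y (v y) - (φ.normed ν ⋆[lsmul ℝ ℝ, ν] Φ) y‖
      ≤ L * (K * Real.exp K) * φ.rOut := by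
  have hχ := hX.hasDerivAt_comp
    ((φ.contDiff_normed_convolution (ν := ν) hΨ.continuous).differentiable one_ne_zero) y 0
  rw [hX.zero] at hχ
  refine (hχ.sub (hX.hasDerivAt_integral_normed_smul φ hv hΨ.continuous hΦ hC hd y)).le_of_lip'
    (by have := φ.rOut_pos; positivity) ?_
  filter_upwards [closedBall_mem_nhds (0 : ℝ) one_pos] with h hh
  have h0 : (φ.normed ν ⋆[lsmul ℝ ℝ, ν] Ψ) (X 0 y)
      - ∫ z, φ.normed ν z • Ψ (X 0 (y - z)) ∂ν = 0 := by
    simp [hX.zero, convolution_def]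
  simp only [Pi.sub_apply, h0, sub_zero, Real.norm_eq_abs h]
  exact hX.norm_normed_convolution_comp_sub_le φ hv hΨ
    (by simpa using mem_closedBall_zero_iff.1 hh) y

end IsFlow

end Mollifier

namespace IsFlow

variable {d : ℕ} {v : EuclideanSpace ℝ (Fin d) → EuclideanSpace ℝ (Fin d)}
  {X : ℝ → EuclideanSpace ℝ (Fin d) → EuclideanSpace ℝ (Fin d)} {K : ℝ≥0}
  {μ : Measure (EuclideanSpace ℝ (Fin d))}

theorem hasDerivAt_integral_comp [IsFiniteMeasure μ] (hX : IsFlow v X) (hv : LipschitzWith K v)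
    (hvper : IsZdPeriodic d v) {ψ : EuclideanSpace ℝ (Fin d) → ℝ} (hψ : ContDiff ℝ 1 ψ)
    (hψper : IsZdPeriodic d ψ) (t : ℝ) :
    HasDerivAt (fun s => ∫ y, ψ (X s y) ∂μ) (∫ y, fderiv ℝ ψ (X t y) (v (X t y)) ∂μ) t := by
  obtain ⟨Cψ, hCψ⟩ := hψper.exists_norm_le hψ.continuous
  obtain ⟨C, hC⟩ := (hψper.fderiv_apply hvper).exists_norm_le
    ((hψ.continuous_fderiv one_ne_zero).clm_apply hv.continuous)
  exact (hasDerivAt_integral_of_dominated_loc_of_deriv_le (x₀ := t) univ_mem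
    (F' := fun s y => fderiv ℝ ψ (X s y) (v (X s y))) (bound := fun _ => C)
    (.of_forall fun s => (hψ.continuous.comp (hX.continuous hv s)).aestronglyMeasurable)
    (.of_bound (hψ.continuous.comp (hX.continuous hv t)).aestronglyMeasurable Cψ
      (.of_forall fun y => hCψ _))
    (((hψ.continuous_fderiv one_ne_zero).clm_apply hv.continuous).comp
      (hX.continuous hv t)).aestronglyMeasurable
    (.of_forall fun y s _ => hC _) (integrable_const C)
    (.of_forall fun y s _ => hX.hasDerivAt_comp (hψ.differentiable one_ne_zero) y s)).2

theorem integral_fderiv_eq_zero [IsFiniteMeasure μ] (hX : IsFlow v X) (hv : LipschitzWith K v)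
    (hvper : IsZdPeriodic d v) (hinv : IsInvariantMeasure X μ)
    {ψ : EuclideanSpace ℝ (Fin d) → ℝ} (hψ : ContDiff ℝ 1 ψ) (hψper : IsZdPeriodic d ψ) :
    ∫ y, fderiv ℝ ψ y (v y) ∂μ = 0 := by
  have h := hX.hasDerivAt_integral_comp (μ := μ) hv hvper hψ hψper 0
  simp only [fun s => hinv s ψ hψ.continuous hψper, hX.zero] at h
  exact h.unique (hasDerivAt_const 0 _)

theorem integral_eq_zero_of_hasDerivAt_comp [IsProbabilityMeasure μ] (hX : IsFlow v X)
    (hv : LipschitzWith K v) (hvper : IsZdPeriodic d v)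
    (hμ : ∀ ψ : EuclideanSpace ℝ (Fin d) → ℝ, ContDiff ℝ 1 ψ → IsZdPeriodic d ψ →
      ∫ y, fderiv ℝ ψ y (v y) ∂μ = 0)
    {Ψ Φ : EuclideanSpace ℝ (Fin d) → ℝ} {L : ℝ≥0} (hΨ : LipschitzWith L Ψ)
    (hΨper : IsZdPeriodic d Ψ) (hΦ : Continuous Φ) (hΦper : IsZdPeriodic d Φ)
    (hd : ∀ w h, HasDerivAt (fun u => Ψ (X u w)) (Φ (X h w)) h) : ∫ y, Φ y ∂μ = 0 := by
  obtain ⟨C, hC⟩ := hΦper.exists_norm_le hΦ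
  have hbound : ∀ φ : ContDiffBump (0 : EuclideanSpace ℝ (Fin d)),
      ‖∫ y, (φ.normed volume ⋆[lsmul ℝ ℝ] Φ) y ∂μ‖ ≤ L * (K * Real.exp K) * φ.rOut := by
    intro φ
    set χ := φ.normed volume ⋆[lsmul ℝ ℝ] Ψ
    have hχ : ContDiff ℝ 1 χ := φ.contDiff_normed_convolution hΨ.continuous
    have hχper : IsZdPeriodic d χ := hΨper.convolution _ _ _
    have hint : Integrable (φ.normed volume ⋆[lsmul ℝ ℝ] Φ) μ :=
      (hΦper.convolution _ _ _).integrable (φ.contDiff_normed_convolution hΦ).continuous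
    have hint' : Integrable (fun y => fderiv ℝ χ y (v y)) μ :=
      (hχper.fderiv_apply hvper).integrable
        ((hχ.continuous_fderiv one_ne_zero).clm_apply hv.continuous)
    calc ‖∫ y, (φ.normed volume ⋆[lsmul ℝ ℝ] Φ) y ∂μ‖
        = ‖∫ y, fderiv ℝ χ y (v y) - (φ.normed volume ⋆[lsmul ℝ ℝ] Φ) y ∂μ‖ := by
          rw [integral_sub hint' hint, hμ χ hχ hχper, zero_sub, norm_neg]
      _ ≤ L * (K * Real.exp K) * φ.rOut * μ.real univ := norm_integral_le_of_norm_le_const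
          (.of_forall (hX.norm_fderiv_normed_convolution_sub_le φ hv hΨ hΦ hC hd))
      _ = L * (K * Real.exp K) * φ.rOut := by simp
  refine tendsto_nhds_unique
    (tendsto_integral_bumpSeq_convolution_comp (ν := volume) hΦ hC aemeasurable_id) ?_
  exact squeeze_zero_norm (fun n => hbound (bumpSeq _ n))
    (by simpa using (tendsto_bumpSeq_rOut _).const_mul (L * (K * Real.exp K) : ℝ))

theorem integral_comp_eq [IsProbabilityMeasure μ] (hX : IsFlow v X) (hv : LipschitzWith K v)
    (hvper : IsZdPeriodic d v)
    (hμ : ∀ ψ : EuclideanSpace ℝ (Fin d) → ℝ, ContDiff ℝ 1 ψ → IsZdPeriodic d ψ →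
      ∫ y, fderiv ℝ ψ y (v y) ∂μ = 0)
    {ψ : EuclideanSpace ℝ (Fin d) → ℝ} (hψ : ContDiff ℝ 1 ψ) (hψper : IsZdPeriodic d ψ)
    (t : ℝ) : ∫ y, ψ (X t y) ∂μ = ∫ y, ψ y ∂μ := by
  obtain ⟨Lψ, hLψ⟩ := hψper.exists_lipschitzWith hψ
  have hderiv : ∀ s, HasDerivAt (fun s => ∫ y, ψ (X s y) ∂μ) 0 s := by
    intro s
    have hXper : ∀ x k, X s (x + intVec d k) = X s x + intVec d k :=
      fun x k => hX.add_const hv (fun y => hvper y k) s x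
    have h0 : ∫ y, fderiv ℝ ψ (X s y) (v (X s y)) ∂μ = 0 :=
      hX.integral_eq_zero_of_hasDerivAt_comp hv hvper hμ (hLψ.comp (hX.lipschitzWith hv s))
        (Φ := fun y => fderiv ℝ ψ (X s y) (v (X s y)))
        (fun x k => by simp only [Function.comp_apply, hXper, fun y => hψper y k])
        (((hψ.continuous_fderiv one_ne_zero).clm_apply hv.continuous).comp (hX.continuous hv s))
        (fun x k => by simp only [hXper, fun y => hψper.fderiv_apply hvper y k])
        (fun w h => by
          simpa only [Function.comp_apply, hX.add hv] using
            (hX.hasDerivAt_comp (hψ.differentiable one_ne_zero) w (s + h)).comp_const_add s h)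
    simpa only [h0] using hX.hasDerivAt_integral_comp (μ := μ) hv hvper hψ hψper s
  simpa [hX.zero] using is_const_of_deriv_eq_zero (fun s => (hderiv s).differentiableAt)
    (fun s => (hderiv s).deriv) t 0

end IsFlow

theorem isInvariantMeasure_of_forall_contDiff {d : ℕ}
    {X : ℝ → EuclideanSpace ℝ (Fin d) → EuclideanSpace ℝ (Fin d)}
    {μ : Measure (EuclideanSpace ℝ (Fin d))} [IsFiniteMeasure μ] (hX : ∀ t, Continuous (X t))
    (h : ∀ t (ψ : EuclideanSpace ℝ (Fin d) → ℝ), ContDiff ℝ 1 ψ → IsZdPeriodic d ψ →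
      ∫ y, ψ (X t y) ∂μ = ∫ y, ψ y ∂μ) :
    IsInvariantMeasure X μ := by
  intro t φ hφ hφper
  obtain ⟨C, hC⟩ := hφper.exists_norm_le hφ
  refine tendsto_nhds_unique ?_
    (tendsto_integral_bumpSeq_convolution_comp (ν := volume) hφ hC aemeasurable_id)
  exact (tendsto_integral_bumpSeq_convolution_comp hφ hC (hX t).aemeasurable).congr fun n =>
    h t _ ((bumpSeq _ n).contDiff_normed_convolution hφ) (hφper.convolution _ _ _)

/-- Liouville's theorem on the torus: a probability measure `μ` on the torus is invariant
for the flow associated with `b` if and only if `∫ b·∇ψ dμ = 0` for every `C¹`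
`ℤ^d`-periodic function `ψ`. -/
theorem stmt7 (d : ℕ) (b : EuclideanSpace ℝ (Fin d) → EuclideanSpace ℝ (Fin d))
    (hb : ContDiff ℝ 1 b) (hbper : IsZdPeriodic d b)
    (X : ℝ → EuclideanSpace ℝ (Fin d) → EuclideanSpace ℝ (Fin d))
    (hX0 : ∀ x, X 0 x = x)
    (hX : ∀ x t, HasDerivAt (fun s => X s x) (b (X t x)) t)
    (μ : Measure (EuclideanSpace ℝ (Fin d))) (hμ : IsTorusMeasure μ) :
    IsInvariantMeasure X μ ↔
      ∀ ψ : EuclideanSpace ℝ (Fin d) → ℝ, ContDiff ℝ 1 ψ → IsZdPeriodic d ψ →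
        ∫ y, (⟪b y, gradient ψ y⟫ : ℝ) ∂μ = 0 := by
  have := hμ.1
  obtain ⟨K, hK⟩ := hbper.exists_lipschitzWith hb
  have hflow : IsFlow b X := ⟨hX0, hX⟩
  simp only [inner_gradient_right, conj_trivial]
  exact ⟨fun hinv ψ hψ hψper => hflow.integral_fderiv_eq_zero hK hbper hinv hψ hψper,
    fun h => isInvariantMeasure_of_forall_contDiff (hflow.continuous hK)
      fun t ψ hψ hψper => hflow.integral_comp_eq hK hbper h hψ hψper t⟩
end
end

section
/- Let b : ℝ → ℝ be a C¹ 1-periodic function with b(y) ≠ 0 for all y, and let X(t,x) be the flow of X' = b(X). Then the probability measure μ(dy) = (b̲ / b(y)) dy on the torus Y₁ = ℝ/ℤ, where b̲ := (∫₀¹ dy/b(y))⁻¹, is the unique invariant probability measure for the flow, and for every x ∈ ℝ, X(t,x)/t → b̲ as t → ∞. -/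
open MeasureTheory Filter Topology

noncomputable section

/-- A Borel probability measure on the one-dimensional torus `Y₁ = ℝ/ℤ`, identified with a
Borel probability measure on `ℝ` carried by the fundamental domain `[0,1)`. -/
def IsTorusMeasure1 (μ : Measure ℝ) : Prop :=
  IsProbabilityMeasure μ ∧ μ (Set.Ico (0 : ℝ) 1)ᶜ = 0

/-- A measure on the torus `Y₁` is invariant for the flow `X` if
`∫ φ(X(t,y)) dμ(y) = ∫ φ dμ` for all `t` and all continuous `1`-periodic `φ`. -/
def IsInvariantMeasure1 (X : ℝ → ℝ → ℝ) (μ : Measure ℝ) : Prop :=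
  ∀ (t : ℝ) (φ : ℝ → ℝ), Continuous φ → Function.Periodic φ 1 →
    ∫ y, φ (X t y) ∂μ = ∫ y, φ y ∂μ

/-!
Since `b` does not vanish it has constant sign, and reversing time we may assume `b > 0`. The
travel time `G x = ∫₀ˣ du / b u` then conjugates the flow to a translation,
`G (X t x) = G x + t`, and `G (x + 1) = G x + 1 / b̲`. In the coordinate `u = G y` the measure
`(b̲ / b y) dy` on `[0, 1)` becomes the normalized Lebesgue measure on the period `[0, 1 / b̲)`,
which is translation invariant. Conversely, averaging an invariant measure over long times shows
that it integrates every continuous periodic function to its mean, and these integrals determine a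
measure on the torus. Finally `G x - x / b̲` is bounded, so `X t x / t → b̲`.
-/

open Set Function

theorem tendsto_div_of_abs_sub_le {l : Filter ℝ} (hl : Tendsto (·⁻¹) l (𝓝 0))
    {f g : ℝ → ℝ} {K c : ℝ} (hfg : ∀ᶠ t in l, |f t - g t| ≤ K)
    (hg : Tendsto (fun t => g t / t) l (𝓝 c)) : Tendsto (fun t => f t / t) l (𝓝 c) := by
  have hsmall : Tendsto (fun t => t⁻¹ * (f t - g t)) l (𝓝 0) :=
    hl.zero_mul_isBoundedUnder_le ⟨K, eventually_map.2 hfg⟩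
  simpa [div_eq_inv_mul, mul_sub] using hg.add hsmall

theorem eq_of_forall_abs_mul_sub_mul_le {A L C : ℝ} (h : ∀ T : ℝ, |T * A - T * L| ≤ C) :
    A = L := by
  by_contra hne
  have hd : 0 < |A - L| := abs_pos.2 (sub_ne_zero.2 hne)
  have hC : 0 ≤ C := by simpa using h 0
  have := h ((C + 1) / |A - L|)
  rw [← mul_sub, abs_mul, abs_div, abs_abs, abs_of_pos (by linarith : 0 < C + 1),
    div_mul_cancel₀ _ hd.ne'] at this
  linarith

theorem integral_intervalIntegral_comp_add {ν : Measure ℝ} [IsProbabilityMeasure ν]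
    {ψ : ℝ → ℝ} {A M : ℝ} (hψ : Continuous ψ) (hM : ∀ x, |ψ x| ≤ M)
    (h : ∀ s, ∫ u, ψ (u + s) ∂ν = A) (T : ℝ) :
    ∫ u, (∫ s in (0:ℝ)..T, ψ (u + s)) ∂ν = T * A := by
  have : IsFiniteMeasure (volume.restrict (uIoc (0:ℝ) T)) :=
    isFiniteMeasure_restrict.2 measure_Ioc_lt_top.ne
  have hint : Integrable (uncurry fun s u => ψ (u + s)) ((volume.restrict (uIoc 0 T)).prod ν) :=
    Integrable.of_bound (by fun_prop) M (Eventually.of_forall fun _ => hM _)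
  rw [← intervalIntegral_integral_swap hint]
  simp only [h, intervalIntegral.integral_const, smul_eq_mul, sub_zero]

namespace Function.Periodic

variable {ψ : ℝ → ℝ} {p : ℝ}

theorem exists_abs_intervalIntegral_sub_mul_le (hp : Periodic ψ p) (hp0 : p ≠ 0)
    (hψ : Continuous ψ) :
    ∃ K, ∀ a, |(∫ u in (0:ℝ)..a, ψ u) - (∫ u in (0:ℝ)..p, ψ u) / p * a| ≤ K := by
  set D : ℝ → ℝ := fun a => (∫ u in (0:ℝ)..a, ψ u) - (∫ u in (0:ℝ)..p, ψ u) / p * a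
  have hcont : Continuous D :=
    (intervalIntegral.continuous_primitive hψ.intervalIntegrable 0).sub (by fun_prop)
  have hper : Periodic D p := by
    intro a
    simp only [D, hp.intervalIntegral_add_eq_add 0 a hψ.intervalIntegrable, zero_add]
    field_simp
    ring
  obtain ⟨K, hK⟩ := (hper.isBounded_of_continuous hp0 hcont).exists_norm_le
  exact ⟨K, fun a => hK _ ⟨a, rfl⟩⟩

/-- Averaging over `s ∈ [0, T]` gives `T * A = ∫ (F (u + T) - F u) dν` for the primitive `F` of
`ψ`, and `F (u + T) - F u = T * mean ψ + O(1)`. -/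
theorem eq_mean_of_integral_comp_add_eq {ν : Measure ℝ} [IsProbabilityMeasure ν] {A : ℝ}
    (hp : Periodic ψ p) (hp0 : p ≠ 0) (hψ : Continuous ψ)
    (h : ∀ s, ∫ u, ψ (u + s) ∂ν = A) : A = (∫ u in (0:ℝ)..p, ψ u) / p := by
  set L := (∫ u in (0:ℝ)..p, ψ u) / p
  set F : ℝ → ℝ := fun a => ∫ u in (0:ℝ)..a, ψ u
  have hF : Continuous F := intervalIntegral.continuous_primitive hψ.intervalIntegrable 0
  obtain ⟨K, hK⟩ := hp.exists_abs_intervalIntegral_sub_mul_le hp0 hψ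
  obtain ⟨M, hM⟩ := (hp.isBounded_of_continuous hp0 hψ).exists_norm_le
  refine eq_of_forall_abs_mul_sub_mul_le (C := 2 * K) fun T => ?_
  have hincr : ∀ u, F (u + T) - F u = ∫ s in (0:ℝ)..T, ψ (u + s) := fun u => by
    rw [intervalIntegral.integral_comp_add_left, add_zero,
      intervalIntegral.integral_interval_sub_left (hψ.intervalIntegrable _ _)
        (hψ.intervalIntegrable _ _)]
  have hD : ∀ u, |F (u + T) - F u - T * L| ≤ 2 * K := fun u => by
    have h1 := abs_le.1 (hK (u + T))
    have h2 := abs_le.1 (hK u)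
    rw [abs_le]
    constructor <;> linarith
  have hFint : Integrable (fun u => F (u + T) - F u) ν :=
    Integrable.of_bound (by fun_prop) (2 * K + |T * L|) (Eventually.of_forall fun u => by
      have := abs_sub_abs_le_abs_sub (F (u + T) - F u) (T * L)
      rw [Real.norm_eq_abs]
      linarith [hD u])
  have : T * A - T * L = ∫ u, (F (u + T) - F u - T * L) ∂ν := by
    rw [integral_sub hFint (integrable_const _), integral_const, probReal_univ, one_smul]
    simp only [hincr, integral_intervalIntegral_comp_add hψ (fun x => hM _ ⟨x, rfl⟩) h]
  rw [this]
  simpa using norm_integral_le_of_norm_le_const (μ := ν)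
    (Eventually.of_forall fun u => (Real.norm_eq_abs _).trans_le (hD u))

end Function.Periodic

theorem MeasureTheory.Measure.ext_of_integral_periodic_eq {T : ℝ} [Fact (0 < T)] {a : ℝ}
    {μ ν : Measure ℝ} [IsFiniteMeasure μ] [IsFiniteMeasure ν]
    (hμ : μ (Ico a (a + T))ᶜ = 0) (hν : ν (Ico a (a + T))ᶜ = 0)
    (h : ∀ φ : ℝ → ℝ, Continuous φ → Periodic φ T →
      ∫ x, φ x ∂μ = ∫ x, φ x ∂ν) : μ = ν := by
  let π : ℝ → AddCircle T := (↑)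
  have hπ : Measurable π := AddCircle.measurable_mk'
  have hmap : μ.map π = ν.map π := ext_of_forall_integral_eq_of_IsFiniteMeasure fun f => by
    rw [integral_map hπ.aemeasurable f.continuous.aestronglyMeasurable,
      integral_map hπ.aemeasurable f.continuous.aestronglyMeasurable]
    exact h (f ∘ π) (f.continuous.comp continuous_quotient_mk')
      fun x => by simp [π]
  -- on the fundamental domain the quotient map is injective, so `μ` is recovered from `μ.map π`
  ext A hA
  let B : Set (AddCircle T) := AddCircle.measurableEquivIco T a ⁻¹' (Subtype.val ⁻¹' A)
  have hB : MeasurableSet B :=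
    (AddCircle.measurableEquivIco T a).measurable (measurable_subtype_coe hA)
  have hAB : ∀ ρ : Measure ℝ, ρ (Ico a (a + T))ᶜ = 0 → ρ A = ρ.map π B := by
    intro ρ hρ
    rw [Measure.map_apply hπ hB, ← measure_inter_conull hρ,
      ← measure_inter_conull (s := π ⁻¹' B) hρ]
    congr 1
    ext x
    simp only [mem_inter_iff, mem_preimage, and_congr_left_iff]
    intro hx
    change x ∈ A ↔ (AddCircle.equivIco T a x : ℝ) ∈ A
    rw [AddCircle.equivIco_coe_eq hx]
  rw [hAB μ hμ, hAB ν hν, hmap]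

theorem Continuous.forall_pos_or_forall_neg {f : ℝ → ℝ} (hf : Continuous f)
    (h0 : ∀ x, f x ≠ 0) :
    (∀ x, 0 < f x) ∨ (∀ x, f x < 0) := by
  by_contra! ⟨⟨x, hx⟩, y, hy⟩
  obtain ⟨z, hz⟩ := intermediate_value_univ x y hf ⟨hx, hy⟩
  exact h0 z hz

def travelTime (b : ℝ → ℝ) (x : ℝ) : ℝ := ∫ u in (0:ℝ)..x, (b u)⁻¹

def harmonicMean (b : ℝ → ℝ) : ℝ := (∫ z in Ico (0:ℝ) 1, (b z)⁻¹)⁻¹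

def invariantMeasure (b : ℝ → ℝ) : Measure ℝ :=
  (volume.restrict (Ico (0:ℝ) 1)).withDensity fun y => ENNReal.ofReal (harmonicMean b / b y)

/-- The limit is taken as `|t| → ∞`, so that the notion survives reversing time. -/
structure IsUniquelyErgodic (b : ℝ → ℝ) (X : ℝ → ℝ → ℝ) : Prop where
  isTorusMeasure1 : IsTorusMeasure1 (invariantMeasure b)
  isInvariantMeasure1 : IsInvariantMeasure1 X (invariantMeasure b)
  eq_invariantMeasure :
    ∀ μ, IsTorusMeasure1 μ → IsInvariantMeasure1 X μ → μ = invariantMeasure b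
  tendsto_div : ∀ x, Tendsto (fun t => X t x / t) (cocompact ℝ) (𝓝 (harmonicMean b))

theorem harmonicMean_eq_inv_travelTime_one (b : ℝ → ℝ) :
    harmonicMean b = (travelTime b 1)⁻¹ := by
  rw [harmonicMean, travelTime, intervalIntegral.integral_of_le zero_le_one,
    integral_Ioc_eq_integral_Ioo, integral_Ico_eq_integral_Ioo]

section Flow

variable {b : ℝ → ℝ} (hb : Continuous b) (hb0 : ∀ y, b y ≠ 0)
include hb hb0

theorem hasDerivAt_travelTime (x : ℝ) : HasDerivAt (travelTime b) (b x)⁻¹ x :=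
  (hb.inv₀ hb0).integral_hasStrictDerivAt 0 x |>.hasDerivAt

theorem continuous_travelTime : Continuous (travelTime b) :=
  intervalIntegral.continuous_primitive (hb.inv₀ hb0).intervalIntegrable 0

theorem travelTime_flow {X : ℝ → ℝ → ℝ} (hX0 : ∀ x, X 0 x = x)
    (hX : ∀ x t, HasDerivAt (fun s => X s x) (b (X t x)) t) (t x : ℝ) :
    travelTime b (X t x) = travelTime b x + t := by
  have hderiv : ∀ s, HasDerivAt (fun r => travelTime b (X r x) - r) 0 s := fun s => by
    simpa [inv_mul_cancel₀ (hb0 _)] using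
      ((hasDerivAt_travelTime hb hb0 _).comp s (hX x s)).fun_sub (hasDerivAt_id' s)
  have := is_const_of_deriv_eq_zero (fun s => (hderiv s).differentiableAt)
    (fun s => (hderiv s).deriv) t 0
  simp only [hX0, sub_zero] at this
  linarith

variable (hbper : Periodic b 1)
include hbper

theorem exists_abs_travelTime_sub_le :
    ∃ K, ∀ x, |travelTime b x - travelTime b 1 * x| ≤ K := by
  simpa [travelTime] using
    (hbper.comp Inv.inv).exists_abs_intervalIntegral_sub_mul_le one_ne_zero (hb.inv₀ hb0)

theorem travelTime_add_one (x : ℝ) : travelTime b (x + 1) = travelTime b x + travelTime b 1 := by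
  have := (hbper.comp Inv.inv).intervalIntegral_add_eq_add 0 x (hb.inv₀ hb0).intervalIntegrable
  rwa [zero_add] at this

end Flow

section Positive

variable {b : ℝ → ℝ} (hb : Continuous b) (hbper : Periodic b 1) (hbpos : ∀ y, 0 < b y)
include hb hbpos

theorem strictMono_travelTime : StrictMono (travelTime b) :=
  strictMono_of_deriv_pos fun x => by
    rw [(hasDerivAt_travelTime hb (fun y => (hbpos y).ne') x).deriv]
    exact inv_pos.2 (hbpos x)

theorem travelTime_one_pos : 0 < travelTime b 1 := by
  simpa [travelTime] using strictMono_travelTime hb hbpos zero_lt_one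

include hbper

theorem surjective_travelTime : Surjective (travelTime b) := by
  obtain ⟨K, hK⟩ := exists_abs_travelTime_sub_le hb (fun y => (hbpos y).ne') hbper
  have hI := travelTime_one_pos hb hbpos
  refine (continuous_travelTime hb fun y => (hbpos y).ne').surjective ?_ ?_
  · refine tendsto_atTop_mono (fun x => ?_) (tendsto_atTop_add_const_right _ (-K)
      ((tendsto_const_mul_atTop_of_pos hI).2 tendsto_id))
    rw [id]
    linarith [(abs_le.1 (hK x)).1]
  · refine tendsto_atBot_mono (fun x => ?_) (tendsto_atBot_add_const_right _ K
      ((tendsto_const_mul_atBot_of_pos hI).2 tendsto_id))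
    rw [id]
    linarith [(abs_le.1 (hK x)).2]

def travelTimeOrderIso : ℝ ≃o ℝ :=
  StrictMono.orderIsoOfSurjective _ (strictMono_travelTime hb hbpos)
    (surjective_travelTime hb hbper hbpos)

theorem travelTimeOrderIso_apply (x : ℝ) : travelTimeOrderIso hb hbper hbpos x = travelTime b x :=
  rfl

theorem travelTime_travelTimeOrderIso_symm (u : ℝ) :
    travelTime b ((travelTimeOrderIso hb hbper hbpos).symm u) = u :=
  (travelTimeOrderIso hb hbper hbpos).apply_symm_apply u

theorem travelTimeOrderIso_symm_travelTime (x : ℝ) :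
    (travelTimeOrderIso hb hbper hbpos).symm (travelTime b x) = x :=
  (travelTimeOrderIso hb hbper hbpos).symm_apply_apply x

theorem travelTimeOrderIso_symm_add_travelTime_one (u : ℝ) :
    (travelTimeOrderIso hb hbper hbpos).symm (u + travelTime b 1) =
      (travelTimeOrderIso hb hbper hbpos).symm u + 1 := by
  rw [OrderIso.symm_apply_eq, travelTimeOrderIso_apply,
    travelTime_add_one hb (fun y => (hbpos y).ne') hbper, travelTime_travelTimeOrderIso_symm]

theorem flow_eq_travelTimeOrderIso_symm {X : ℝ → ℝ → ℝ} (hX0 : ∀ x, X 0 x = x)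
    (hX : ∀ x t, HasDerivAt (fun s => X s x) (b (X t x)) t) (t x : ℝ) :
    X t x = (travelTimeOrderIso hb hbper hbpos).symm (travelTime b x + t) := by
  rw [OrderIso.eq_symm_apply, travelTimeOrderIso_apply,
    travelTime_flow hb (fun y => (hbpos y).ne') hX0 hX]

theorem integral_invariantMeasure {ψ : ℝ → ℝ} (hψ : Continuous ψ) :
    ∫ y, ψ y ∂invariantMeasure b =
      (∫ u in (0:ℝ)..travelTime b 1, ψ ((travelTimeOrderIso hb hbper hbpos).symm u)) /
        travelTime b 1 := by
  set e := travelTimeOrderIso hb hbper hbpos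
  have hdens : Measurable fun y => ENNReal.ofReal (harmonicMean b / b y) :=
    ENNReal.measurable_ofReal.comp (measurable_const.div hb.measurable)
  have hintegrand : ∀ y, (ENNReal.ofReal (harmonicMean b / b y)).toReal • ψ y =
      ((b y)⁻¹ • ((ψ ∘ e.symm) ∘ travelTime b) y) / travelTime b 1 := fun y => by
    have : 0 ≤ harmonicMean b / b y := by
      rw [harmonicMean_eq_inv_travelTime_one]
      exact div_nonneg (inv_nonneg.2 (travelTime_one_pos hb hbpos).le) (hbpos y).le
    rw [ENNReal.toReal_ofReal this, comp_apply, comp_apply, travelTimeOrderIso_symm_travelTime,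
      harmonicMean_eq_inv_travelTime_one, smul_eq_mul, smul_eq_mul]
    ring
  rw [invariantMeasure, integral_withDensity_eq_integral_toReal_smul hdens
    (Eventually.of_forall fun _ => ENNReal.ofReal_lt_top)]
  simp only [hintegrand]
  rw [integral_div, integral_Ico_eq_integral_Ioo, ← integral_Ioc_eq_integral_Ioo,
    ← intervalIntegral.integral_of_le zero_le_one,
    intervalIntegral.integral_deriv_smul_comp
      (fun x _ => hasDerivAt_travelTime hb (fun y => (hbpos y).ne') x)
      (hb.inv₀ fun y => (hbpos y).ne').continuousOn (hψ.comp e.symm.continuous)]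
  simp [travelTime]

theorem isTorusMeasure1_invariantMeasure : IsTorusMeasure1 (invariantMeasure b) := by
  refine ⟨⟨?_⟩, ?_⟩
  · have h := integral_invariantMeasure hb hbper hbpos (ψ := fun _ => (1:ℝ)) continuous_const
    simp only [integral_const, smul_eq_mul, mul_one, intervalIntegral.integral_const, sub_zero,
      div_self (travelTime_one_pos hb hbpos).ne'] at h
    exact (ENNReal.toReal_eq_one_iff _).1 h
  · rw [invariantMeasure, withDensity_apply _ measurableSet_Ico.compl,
      Measure.restrict_restrict measurableSet_Ico.compl, compl_inter_self,
      Measure.restrict_empty, lintegral_zero_measure]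

theorem periodic_comp_travelTimeOrderIso_symm {φ : ℝ → ℝ} (hφ : Periodic φ 1) :
    Periodic (φ ∘ (travelTimeOrderIso hb hbper hbpos).symm) (travelTime b 1) := fun u => by
  simp only [comp_apply, travelTimeOrderIso_symm_add_travelTime_one, hφ _]

theorem isInvariantMeasure1_invariantMeasure {X : ℝ → ℝ → ℝ} (hX0 : ∀ x, X 0 x = x)
    (hX : ∀ x t, HasDerivAt (fun s => X s x) (b (X t x)) t) :
    IsInvariantMeasure1 X (invariantMeasure b) := by
  intro t φ hφ hφper
  set e := travelTimeOrderIso hb hbper hbpos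
  simp only [flow_eq_travelTimeOrderIso_symm hb hbper hbpos hX0 hX t]
  rw [integral_invariantMeasure hb hbper hbpos (ψ := fun y => φ (e.symm (travelTime b y + t)))
      (hφ.comp (e.symm.continuous.comp ((continuous_travelTime hb fun y => (hbpos y).ne').add
        continuous_const))),
    integral_invariantMeasure hb hbper hbpos hφ]
  simp only [travelTime_travelTimeOrderIso_symm]
  rw [intervalIntegral.integral_comp_add_right (fun u => φ (e.symm u)), zero_add, add_comm _ t]
  congr 1
  simpa using
    (periodic_comp_travelTimeOrderIso_symm hb hbper hbpos hφper).intervalIntegral_add_eq t 0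

theorem eq_invariantMeasure_of_isInvariantMeasure1 {X : ℝ → ℝ → ℝ} (hX0 : ∀ x, X 0 x = x)
    (hX : ∀ x t, HasDerivAt (fun s => X s x) (b (X t x)) t) {μ : Measure ℝ}
    (hμ : IsTorusMeasure1 μ) (hinv : IsInvariantMeasure1 X μ) : μ = invariantMeasure b := by
  obtain ⟨hμprob, hμ0⟩ := hμ
  obtain ⟨hμ₀prob, hμ₀0⟩ := isTorusMeasure1_invariantMeasure hb hbper hbpos
  have : Fact ((0:ℝ) < 1) := ⟨one_pos⟩
  refine Measure.ext_of_integral_periodic_eq (a := 0) (by simpa using hμ0) (by simpa using hμ₀0)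
    fun φ hφ hφper => ?_
  set e := travelTimeOrderIso hb hbper hbpos
  have hG := continuous_travelTime hb fun y => (hbpos y).ne'
  have : IsProbabilityMeasure (μ.map (travelTime b)) :=
    Measure.isProbabilityMeasure_map hG.measurable.aemeasurable
  rw [integral_invariantMeasure hb hbper hbpos hφ]
  refine (periodic_comp_travelTimeOrderIso_symm hb hbper hbpos hφper
    ).eq_mean_of_integral_comp_add_eq (ν := μ.map (travelTime b))
    (travelTime_one_pos hb hbpos).ne' (hφ.comp e.symm.continuous) fun s => ?_
  simp only [comp_apply]
  rw [integral_map hG.measurable.aemeasurable]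
  · simpa only [flow_eq_travelTimeOrderIso_symm hb hbper hbpos hX0 hX] using hinv s φ hφ hφper
  · exact ((hφ.comp e.symm.continuous).comp (continuous_add_const s)).aestronglyMeasurable

theorem tendsto_flow_div_cocompact {X : ℝ → ℝ → ℝ} (hX0 : ∀ x, X 0 x = x)
    (hX : ∀ x t, HasDerivAt (fun s => X s x) (b (X t x)) t) (x : ℝ) :
    Tendsto (fun t => X t x / t) (cocompact ℝ) (𝓝 (harmonicMean b)) := by
  obtain ⟨K, hK⟩ := exists_abs_travelTime_sub_le hb (fun y => (hbpos y).ne') hbper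
  have hI := travelTime_one_pos hb hbpos
  have hl : Tendsto (·⁻¹) (cocompact ℝ) (𝓝 (0:ℝ)) :=
    Metric.cobounded_eq_cocompact (α := ℝ) ▸ tendsto_inv₀_cobounded
  have hlin : Tendsto (fun t => (travelTime b x + t) / t) (cocompact ℝ) (𝓝 1) := by
    have := (hl.const_mul (travelTime b x)).add_const 1
    rw [mul_zero, zero_add] at this
    refine this.congr' (eventually_of_mem (isCompact_singleton (x := (0:ℝ))).compl_mem_cocompact
      fun t ht => ?_)
    field_simp [show t ≠ 0 from ht]
  have hbound : ∀ t, |travelTime b 1 * X t x - (travelTime b x + t)| ≤ K := fun t => by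
    rw [← travelTime_flow hb (fun y => (hbpos y).ne') hX0 hX, abs_sub_comm]
    exact hK _
  have h := (tendsto_div_of_abs_sub_le hl (Eventually.of_forall hbound) hlin).const_mul
    (travelTime b 1)⁻¹
  rw [harmonicMean_eq_inv_travelTime_one, ← mul_one (travelTime b 1)⁻¹]
  refine h.congr fun t => ?_
  field_simp

theorem IsUniquelyErgodic.of_pos {X : ℝ → ℝ → ℝ} (hX0 : ∀ x, X 0 x = x)
    (hX : ∀ x t, HasDerivAt (fun s => X s x) (b (X t x)) t) : IsUniquelyErgodic b X where
  isTorusMeasure1 := isTorusMeasure1_invariantMeasure hb hbper hbpos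
  isInvariantMeasure1 := isInvariantMeasure1_invariantMeasure hb hbper hbpos hX0 hX
  eq_invariantMeasure _ := eq_invariantMeasure_of_isInvariantMeasure1 hb hbper hbpos hX0 hX
  tendsto_div := tendsto_flow_div_cocompact hb hbper hbpos hX0 hX

end Positive

section TimeReversal

variable {b : ℝ → ℝ} {X : ℝ → ℝ → ℝ}

theorem hasDerivAt_flow_comp_neg (hX : ∀ x t, HasDerivAt (fun s => X s x) (b (X t x)) t)
    (x t : ℝ) : HasDerivAt (fun s => X (-s) x) (-b (X (-t) x)) t := by
  have := (hX x (-t)).scomp t (hasDerivAt_neg t)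
  simp only [comp_def, neg_one_smul] at this
  exact this

theorem harmonicMean_neg : harmonicMean (fun y => -b y) = -harmonicMean b := by
  simp [harmonicMean, integral_neg]

theorem invariantMeasure_neg : invariantMeasure (fun y => -b y) = invariantMeasure b := by
  simp [invariantMeasure, harmonicMean_neg]

theorem isInvariantMeasure1_comp_neg_iff {μ : Measure ℝ} :
    IsInvariantMeasure1 (fun t => X (-t)) μ ↔ IsInvariantMeasure1 X μ :=
  ⟨fun h t => by simpa using h (-t), fun h t => h (-t)⟩

theorem IsUniquelyErgodic.of_comp_neg (h : IsUniquelyErgodic (fun y => -b y) fun t => X (-t)) :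
    IsUniquelyErgodic b X where
  isTorusMeasure1 := invariantMeasure_neg (b := b) ▸ h.isTorusMeasure1
  isInvariantMeasure1 := by
    simpa only [invariantMeasure_neg, isInvariantMeasure1_comp_neg_iff] using h.isInvariantMeasure1
  eq_invariantMeasure μ hμ hinv := by
    simpa only [invariantMeasure_neg] using
      h.eq_invariantMeasure μ hμ (isInvariantMeasure1_comp_neg_iff.2 hinv)
  tendsto_div x := by
    have hneg : Tendsto (Neg.neg : ℝ → ℝ) (cocompact ℝ) (cocompact ℝ) :=
      (Homeomorph.neg ℝ).map_cocompact.le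
    have := ((h.tendsto_div x).comp hneg).neg
    simpa only [comp_def, neg_neg, div_neg, harmonicMean_neg] using this

end TimeReversal

/-- If `b` is `C¹`, `1`-periodic and nonvanishing, then `(b̲/b(y)) dy`, with `b̲` the
harmonic mean of `b`, is the unique invariant probability measure on the torus for the flow
of `X' = b(X)`, and `X(t,x)/t → b̲` as `t → ∞` for every `x`. -/
theorem stmt11 (b : ℝ → ℝ) (hb : ContDiff ℝ 1 b) (hbper : Function.Periodic b 1)
    (hb0 : ∀ y, b y ≠ 0)
    (X : ℝ → ℝ → ℝ) (hX0 : ∀ x, X 0 x = x)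
    (hX : ∀ x t, HasDerivAt (fun s => X s x) (b (X t x)) t) :
    (IsTorusMeasure1
        ((volume.restrict (Set.Ico (0 : ℝ) 1)).withDensity
          (fun y => ENNReal.ofReal ((∫ z in Set.Ico (0 : ℝ) 1, (b z)⁻¹)⁻¹ / b y)) ) ∧
      IsInvariantMeasure1 X
        ((volume.restrict (Set.Ico (0 : ℝ) 1)).withDensity
          (fun y => ENNReal.ofReal ((∫ z in Set.Ico (0 : ℝ) 1, (b z)⁻¹)⁻¹ / b y))) ∧
      (∀ μ : Measure ℝ, IsTorusMeasure1 μ → IsInvariantMeasure1 X μ →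
        μ = (volume.restrict (Set.Ico (0 : ℝ) 1)).withDensity
          (fun y => ENNReal.ofReal ((∫ z in Set.Ico (0 : ℝ) 1, (b z)⁻¹)⁻¹ / b y)))) ∧
    ∀ x : ℝ, Tendsto (fun t : ℝ => X t x / t) atTop
      (𝓝 ((∫ z in Set.Ico (0 : ℝ) 1, (b z)⁻¹)⁻¹)) := by
  have h : IsUniquelyErgodic b X := by
    rcases hb.continuous.forall_pos_or_forall_neg hb0 with hpos | hneg
    · exact .of_pos hb.continuous hbper hpos hX0 hX
    · exact .of_comp_neg <| .of_pos hb.continuous.neg (hbper.comp Neg.neg)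
        (fun y => neg_pos.2 (hneg y)) (by simpa using hX0) (hasDerivAt_flow_comp_neg hX)
  exact ⟨⟨h.isTorusMeasure1, h.isInvariantMeasure1, h.eq_invariantMeasure⟩,
    fun x => (h.tendsto_div x).mono_left atTop_le_cocompact⟩
end
end

section
/- Let b : ℝ → ℝ be a C¹ 1-periodic function that vanishes at some point, and let μ be any invariant Borel probability measure on the torus Y₁ = ℝ/ℤ for the flow of X' = b(X). Then ∫_{{y : b(y)≠0}} (b(y)/|b(y)|) dμ(y) = 0. -/
/-!
Since `b` is `C¹` and periodic it is Lipschitz, so trajectories cannot cross zeros of `b`, and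
`b ∘ X(·, y)` never changes sign. Every trajectory is thus monotone and trapped between two
consecutive zeros of the periodic function `b`, hence converges, and by the mean value theorem
its limit is a zero of `b`. So `|b (X t y)| → 0` for every `y`, while by invariance
`∫ |b (X t y)| dμ(y) = ∫ |b| dμ`; dominated convergence gives `∫ |b| dμ = 0`, so `μ` does not
charge `{b ≠ 0}` at all.
-/

open MeasureTheory Filter Topology

noncomputable section

open Function Set
open scoped NNReal

theorem Function.Periodic.exists_lipschitzWith_of_contDiff {b : ℝ → ℝ} {c : ℝ}
    (hper : Periodic b c) (hc : c ≠ 0) (hb : ContDiff ℝ 1 b) : ∃ K, LipschitzWith K b := by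
  have hper' : Periodic (deriv b) c := fun x => by
    rw [← deriv_comp_add_const, show (fun y => b (y + c)) = b from funext hper]
  obtain ⟨C, hC⟩ := isBounded_iff_forall_norm_le.mp
    (hper'.isBounded_of_continuous hc (hb.continuous_deriv le_rfl))
  refine ⟨C.toNNReal, lipschitzWith_of_nnnorm_deriv_le (hb.differentiable one_ne_zero) fun x => ?_⟩
  rw [← NNReal.coe_le_coe, coe_nnnorm]
  exact (hC _ ⟨x, rfl⟩).trans (Real.le_coe_toNNReal C)

theorem Function.Periodic.exists_mem_Ioo_of_map_eq_zero {b : ℝ → ℝ} (hper : Periodic b 1) {y₀ : ℝ}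
    (hy₀ : b y₀ = 0) (x : ℝ) : ∃ z₁ z₂, b z₁ = 0 ∧ b z₂ = 0 ∧ x ∈ Ioo z₁ z₂ := by
  have hzero : ∀ n : ℤ, b (y₀ + n) = 0 := fun n => by simpa [hy₀] using hper.int_mul n y₀
  refine ⟨_, _, hzero (⌊x - y₀⌋ - 1), hzero (⌊x - y₀⌋ + 1), ?_, ?_⟩ <;> push_cast
  · linarith [Int.floor_le (x - y₀)]
  · linarith [Int.lt_floor_add_one (x - y₀)]

theorem Continuous.lt_iff_lt_of_forall_ne {f : ℝ → ℝ} (hf : Continuous f) {z : ℝ}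
    (hz : ∀ t, f t ≠ z) (s t : ℝ) : f s < z ↔ f t < z := by
  suffices ∀ s t, f s < z → f t < z from ⟨this s t, this t s⟩
  intro s t hs
  by_contra! ht
  obtain ⟨r, -, hr⟩ := intermediate_value_uIcc hf.continuousOn (mem_uIcc.mpr (Or.inl ⟨hs.le, ht⟩))
  exact hz r hr

section AutonomousODE

variable {b f g : ℝ → ℝ} {K : ℝ≥0}

theorem eq_of_hasDerivAt_of_lipschitzWith (hL : LipschitzWith K b)
    (hf : ∀ t, HasDerivAt f (b (f t)) t) (hg : ∀ t, HasDerivAt g (b (g t)) t) {t₀ : ℝ}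
    (h : f t₀ = g t₀) : f = g :=
  ODE_solution_unique_univ (v := fun _ => b) (s := fun _ => univ)
    (fun _ => hL.lipschitzOnWith) (fun t => ⟨hf t, trivial⟩) (fun t => ⟨hg t, trivial⟩) h

theorem eq_const_of_hasDerivAt_of_map_eq_zero (hL : LipschitzWith K b)
    (hf : ∀ t, HasDerivAt f (b (f t)) t) {t₀ : ℝ} (h : b (f t₀) = 0) : f = fun _ => f t₀ :=
  eq_of_hasDerivAt_of_lipschitzWith hL hf
    (fun t => by simpa [h] using hasDerivAt_const t (f t₀)) rfl

theorem ne_of_hasDerivAt_of_map_eq_zero (hL : LipschitzWith K b)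
    (hf : ∀ t, HasDerivAt f (b (f t)) t) {z : ℝ} (hz : b z = 0) {t₀ : ℝ} (h : f t₀ ≠ z)
    (t : ℝ) : f t ≠ z := by
  rintro rfl
  exact h (congrFun (eq_const_of_hasDerivAt_of_map_eq_zero hL hf hz) t₀)

theorem mem_Ioo_of_hasDerivAt (hL : LipschitzWith K b) (hf : ∀ t, HasDerivAt f (b (f t)) t)
    {z₁ z₂ : ℝ} (hz₁ : b z₁ = 0) (hz₂ : b z₂ = 0) {t₀ : ℝ} (h : f t₀ ∈ Ioo z₁ z₂) (t : ℝ) :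
    f t ∈ Ioo z₁ z₂ := by
  have hcont : Continuous f := continuous_iff_continuousAt.mpr fun t => (hf t).continuousAt
  have hne₁ := ne_of_hasDerivAt_of_map_eq_zero hL hf hz₁ h.1.ne'
  have hne₂ := ne_of_hasDerivAt_of_map_eq_zero hL hf hz₂ h.2.ne
  refine ⟨lt_of_le_of_ne ?_ (hne₁ t).symm, (hcont.lt_iff_lt_of_forall_ne hne₂ t₀ t).mp h.2⟩
  exact not_lt.mp fun ht => h.1.not_gt ((hcont.lt_iff_lt_of_forall_ne hne₁ t₀ t).mpr ht)

theorem monotone_or_antitone_of_hasDerivAt (hL : LipschitzWith K b)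
    (hf : ∀ t, HasDerivAt f (b (f t)) t) : Monotone f ∨ Antitone f := by
  by_cases h0 : b (f 0) = 0
  · rw [eq_const_of_hasDerivAt_of_map_eq_zero hL hf h0]
    exact Or.inl monotone_const
  have hne : ∀ t, b (f t) ≠ 0 := fun t ht =>
    h0 (by rwa [congrFun (eq_const_of_hasDerivAt_of_map_eq_zero hL hf ht) 0])
  have hcont : Continuous fun t => b (f t) :=
    hL.continuous.comp (continuous_iff_continuousAt.mpr fun t => (hf t).continuousAt)
  rcases lt_or_gt_of_ne h0 with hneg | hpos
  · exact Or.inr (antitone_of_hasDerivAt_nonpos hf fun t =>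
      ((hcont.lt_iff_lt_of_forall_ne hne 0 t).mp hneg).le)
  · exact Or.inl (monotone_of_hasDerivAt_nonneg hf fun t =>
      not_lt.mp fun ht => hpos.not_gt ((hcont.lt_iff_lt_of_forall_ne hne 0 t).mpr ht))

theorem map_eq_zero_of_hasDerivAt_of_tendsto (hb : Continuous b)
    (hf : ∀ t, HasDerivAt f (b (f t)) t) {ℓ : ℝ} (hℓ : Tendsto f atTop (𝓝 ℓ)) : b ℓ = 0 := by
  have hcont : Continuous f := continuous_iff_continuousAt.mpr fun t => (hf t).continuousAt
  have hmvt : ∀ n : ℕ, ∃ ξ ∈ Ioo (n : ℝ) (n + 1), b (f ξ) = f (n + 1) - f n := fun n => by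
    obtain ⟨ξ, hξ, h⟩ := exists_hasDerivAt_eq_slope f (fun t => b (f t))
      (lt_add_one (n : ℝ)) hcont.continuousOn (fun t _ => hf t)
    exact ⟨ξ, hξ, by simpa using h⟩
  choose ξ hξ hslope using hmvt
  have hξ : Tendsto ξ atTop atTop :=
    tendsto_atTop_mono (fun n => (hξ n).1.le) tendsto_natCast_atTop_atTop
  have hshift : Tendsto (fun n : ℕ => (n : ℝ) + 1) atTop atTop :=
    tendsto_atTop_add_const_right _ 1 tendsto_natCast_atTop_atTop
  have hdiff := (hℓ.comp hshift).sub (hℓ.comp tendsto_natCast_atTop_atTop)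
  rw [sub_self] at hdiff
  refine tendsto_nhds_unique ((hb.tendsto ℓ).comp (hℓ.comp hξ)) ?_
  simpa only [Function.comp_def, hslope] using hdiff

theorem exists_tendsto_of_hasDerivAt (hL : LipschitzWith K b)
    (hf : ∀ t, HasDerivAt f (b (f t)) t) {z₁ z₂ : ℝ} (hz₁ : b z₁ = 0) (hz₂ : b z₂ = 0)
    (h : f 0 ∈ Ioo z₁ z₂) : ∃ ℓ, b ℓ = 0 ∧ Tendsto f atTop (𝓝 ℓ) := by
  have hbdd := mem_Ioo_of_hasDerivAt hL hf hz₁ hz₂ h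
  obtain ⟨ℓ, hℓ⟩ : ∃ ℓ, Tendsto f atTop (𝓝 ℓ) := by
    rcases monotone_or_antitone_of_hasDerivAt hL hf with hmono | hanti
    · exact ⟨_, tendsto_atTop_ciSup hmono ⟨z₂, by rintro _ ⟨t, rfl⟩; exact (hbdd t).2.le⟩⟩
    · exact ⟨_, tendsto_atTop_ciInf hanti ⟨z₁, by rintro _ ⟨t, rfl⟩; exact (hbdd t).1.le⟩⟩
  exact ⟨ℓ, map_eq_zero_of_hasDerivAt_of_tendsto hL.continuous hf hℓ, hℓ⟩

theorem monotone_of_hasDerivAt_flow (hL : LipschitzWith K b) {X : ℝ → ℝ → ℝ}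
    (hX0 : ∀ x, X 0 x = x) (hX : ∀ x t, HasDerivAt (fun s => X s x) (b (X t x)) t) (t : ℝ) :
    Monotone (X t) := by
  intro y y' hyy'
  rcases hyy'.lt_or_eq with hlt | rfl
  · have hne : ∀ s, X s y - X s y' ≠ 0 := fun s hs => hlt.ne <| by
      simpa [hX0] using
        congrFun (eq_of_hasDerivAt_of_lipschitzWith hL (hX y) (hX y') (sub_eq_zero.mp hs)) 0
    have hcont : Continuous fun s => X s y - X s y' :=
      continuous_iff_continuousAt.mpr fun s => ((hX y s).sub (hX y' s)).continuousAt
    have hlt' : X t y - X t y' < 0 :=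
      (hcont.lt_iff_lt_of_forall_ne hne 0 t).mp (by simpa [hX0] using hlt)
    exact (sub_neg.mp hlt').le
  · exact le_rfl

end AutonomousODE

theorem measure_setOf_ne_zero_eq_zero_of_invariant {b : ℝ → ℝ} (hb : Continuous b)
    (hper : Periodic b 1) {X : ℝ → ℝ → ℝ} (hXmeas : ∀ t, Measurable (X t))
    (hlim : ∀ y, Tendsto (fun t => b (X t y)) atTop (𝓝 0)) {μ : Measure ℝ} [IsFiniteMeasure μ]
    (hinv : IsInvariantMeasure1 X μ) : μ {y | b y ≠ 0} = 0 := by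
  obtain ⟨C, hC⟩ := isBounded_iff_forall_norm_le.mp
    ((hper.comp abs).isBounded_of_continuous one_ne_zero hb.abs)
  have hdom := tendsto_integral_filter_of_dominated_convergence (μ := μ) (l := atTop)
    (F := fun t y => |b (X t y)|) (fun _ => C)
    (Eventually.of_forall fun t => (hb.abs.measurable.comp (hXmeas t)).aestronglyMeasurable)
    (Eventually.of_forall fun t => ae_of_all _ fun y => hC _ ⟨_, rfl⟩) (integrable_const C)
    (ae_of_all _ fun y => by simpa using (hlim y).abs)
  simp only [hinv _ _ hb.abs (hper.comp abs), integral_zero] at hdom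
  have hint : ∫ y, |b y| ∂μ = 0 := tendsto_nhds_unique tendsto_const_nhds hdom
  have hae := (integral_eq_zero_iff_of_nonneg (fun y => abs_nonneg (b y))
    (.of_bound hb.abs.aestronglyMeasurable C (ae_of_all _ fun y => hC _ ⟨y, rfl⟩))).mp hint
  simpa [EventuallyEq, ae_iff] using hae

/-- If `b` is `C¹`, `1`-periodic and vanishes at some point, then any invariant probability
measure `μ` on the torus for the flow of `X' = b(X)` satisfies
`∫_{{b ≠ 0}} b/|b| dμ = 0`. -/
theorem stmt13 (b : ℝ → ℝ) (hb : ContDiff ℝ 1 b) (hbper : Function.Periodic b 1)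
    (hb0 : ∃ y : ℝ, b y = 0)
    (X : ℝ → ℝ → ℝ) (hX0 : ∀ x, X 0 x = x)
    (hX : ∀ x t, HasDerivAt (fun s => X s x) (b (X t x)) t)
    (μ : Measure ℝ) (hμ : IsTorusMeasure1 μ) (hinv : IsInvariantMeasure1 X μ) :
    ∫ y in {y : ℝ | b y ≠ 0}, b y / |b y| ∂μ = 0 := by
  have := hμ.1
  obtain ⟨K, hL⟩ := hbper.exists_lipschitzWith_of_contDiff one_ne_zero hb
  obtain ⟨y₀, hy₀⟩ := hb0
  have hlim : ∀ y, Tendsto (fun t => b (X t y)) atTop (𝓝 0) := fun y => by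
    obtain ⟨z₁, z₂, hz₁, hz₂, hy⟩ := hbper.exists_mem_Ioo_of_map_eq_zero hy₀ (X 0 y)
    obtain ⟨ℓ, hℓ, hXℓ⟩ := exists_tendsto_of_hasDerivAt hL (hX y) hz₁ hz₂ hy
    exact hℓ ▸ (hL.continuous.tendsto ℓ).comp hXℓ
  have hXmeas t := (monotone_of_hasDerivAt_flow hL hX0 hX t).measurable
  exact setIntegral_measure_zero _
    (measure_setOf_ne_zero_eq_zero_of_invariant hL.continuous hbper hXmeas hlim hinv)

end
end

section
/- Let a : ℝ^d → ℝ be a nonnegative C¹ ℤ^d-periodic function and ξ ∈ ℝ^d with |ξ| = 1 such that Tξ ∈ ℤ^d for some T > 0. Let X(t,x) be the flow of b = a ξ, and let Π_{ξ⊥} denote the orthogonal projection onto the hyperplane ξ⊥. Then for every x ∈ ℝ^d, X(t,x)/t → a*(x) ξ as t → ∞, where a*(x) = ((1/T) ∫₀^T ds / a(sξ + Π_{ξ⊥}(x)))⁻¹ if a(uξ + Π_{ξ⊥}(x)) ≠ 0 for all u ∈ ℝ, and a*(x) = 0 if a(uξ + Π_{ξ⊥}(x)) = 0 for some u ∈ ℝ.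 -/
open MeasureTheory Filter Topology
open scoped RealInnerProductSpace

noncomputable section

/-! Along the flow, `X(t,x) - ⟪X(t,x), ξ⟫ ξ` is constant, so the problem reduces to the scalar
autonomous equation `v' = g(v)` for `v(t) = ⟪X(t,x), ξ⟫` and `g(u) = a(uξ + Π_{ξ⊥}(x))`, which is
`T`-periodic because `Tξ ∈ ℤ^d`. If `g > 0`, separation of variables gives
`∫_{v(0)}^{v(t)} 1/g = t`, and the primitive of the periodic function `1/g` grows like
`(w/T) ∫_0^T 1/g`, so `v(t)/t` tends to the harmonic mean of `g`. If `g` vanishes somewhere, it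
vanishes at some `u₀ ≥ v(0)`; as `g` is Lipschitz, `u₀` is an equilibrium that `v` cannot cross,
so the nondecreasing `v` converges. -/

open Set

namespace Function.Periodic

variable {g : ℝ → ℝ} {T : ℝ}

theorem deriv (hg : Periodic g T) : Periodic (deriv g) T := fun x => by
  rw [← deriv_comp_add_const, show (fun y => g (y + T)) = g from funext hg]

theorem exists_lipschitzWith (hg : Periodic g T) (hT : T ≠ 0) (hC : ContDiff ℝ 1 g) :
    ∃ K, LipschitzWith K g := by
  obtain ⟨C, hC'⟩ := (hg.deriv.isBounded_of_continuous hT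
    (hC.continuous_deriv le_rfl)).exists_norm_le
  refine ⟨C.toNNReal, lipschitzWith_of_nnnorm_deriv_le (hC.differentiable one_ne_zero) fun x => ?_⟩
  rw [← norm_toNNReal]
  exact Real.toNNReal_mono (hC' _ (mem_range_self x))

theorem tendsto_intervalIntegral_div_atTop (hg : Periodic g T) (hT : T ≠ 0)
    (hc : Continuous g) (c : ℝ) :
    Tendsto (fun w => (∫ s in c..w, g s) / w) atTop (𝓝 ((∫ s in (0 : ℝ)..T, g s) / T)) := by
  set J := ∫ s in (0 : ℝ)..T, g s
  set h : ℝ → ℝ := fun w => (∫ s in c..w, g s) - w * (J / T)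
  have hper : Periodic h T := fun w => by
    simp only [h]
    rw [hg.intervalIntegral_add_eq_add c w (fun _ _ => hc.intervalIntegrable _ _),
      hg.intervalIntegral_add_eq c 0, zero_add]
    field_simp
    ring
  have hcont : Continuous h :=
    (intervalIntegral.continuous_primitive (fun _ _ => hc.intervalIntegrable _ _) c).sub
      (continuous_id.mul continuous_const)
  have hbdd : IsBoundedUnder (· ≤ ·) atTop (fun w => ‖h w‖) := by
    obtain ⟨C, hC⟩ := (hper.isBounded_of_continuous hT hcont).exists_norm_le
    exact ⟨C, eventually_map.2 (Eventually.of_forall fun w => hC _ (mem_range_self w))⟩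
  have hvanish : Tendsto (fun w => h w * w⁻¹) atTop (𝓝 0) :=
    isBoundedUnder_le_mul_tendsto_zero hbdd tendsto_inv_atTop_zero
  rw [← zero_add (J / T)]
  refine (hvanish.add_const (J / T)).congr' ?_
  filter_upwards [eventually_ne_atTop 0] with w hw
  simp only [h]
  field_simp
  ring

end Function.Periodic

theorem eq_const_of_hasDerivAt_of_lipschitzWith {g : ℝ → ℝ} {K : NNReal} (hg : LipschitzWith K g)
    {v : ℝ → ℝ} (hv : ∀ t, HasDerivAt v (g (v t)) t) {t₀ : ℝ} (h : g (v t₀) = 0) :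
    v = fun _ => v t₀ :=
  ODE_solution_unique_univ (v := fun _ => g) (s := fun _ => univ) (t₀ := t₀)
    (fun _ => hg.lipschitzOnWith) (fun t => ⟨hv t, trivial⟩)
    (fun _ => ⟨by simpa [h] using hasDerivAt_const _ (v t₀), trivial⟩) rfl

theorem tendsto_div_atTop_zero_of_hasDerivAt_of_periodic {g : ℝ → ℝ} {T : ℝ}
    (hC : ContDiff ℝ 1 g) (hg : Function.Periodic g T) (hT : 0 < T) (hnn : ∀ u, 0 ≤ g u)
    {u₁ : ℝ} (hu₁ : g u₁ = 0) {v : ℝ → ℝ} (hv : ∀ t, HasDerivAt v (g (v t)) t) :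
    Tendsto (fun t => v t / t) atTop (𝓝 0) := by
  obtain ⟨K, hK⟩ := hg.exists_lipschitzWith hT.ne' hC
  obtain ⟨n, hn⟩ := exists_nat_ge ((v 0 - u₁) / T)
  set u₀ := u₁ + n * T
  have hu₀ : g u₀ = 0 := by rw [hg.nat_mul n u₁, hu₁]
  have hv₀ : v 0 ≤ u₀ := by have := (div_le_iff₀ hT).1 hn; linarith
  have hcont : Continuous v := continuous_iff_continuousAt.2 fun t => (hv t).continuousAt
  -- by uniqueness, a solution reaching the equilibrium `u₀` is constant
  have hle : ∀ t, v t ≤ u₀ := by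
    intro t
    by_contra! hlt
    obtain ⟨s, -, hs⟩ := intermediate_value_uIcc hcont.continuousOn
      (show u₀ ∈ uIcc (v 0) (v t) from mem_uIcc.2 (Or.inl ⟨hv₀, hlt.le⟩))
    have := congrFun (eq_const_of_hasDerivAt_of_lipschitzWith hK hv (hs ▸ hu₀)) t
    linarith
  have hmono : Monotone v :=
    monotone_of_deriv_nonneg (fun t => (hv t).differentiableAt)
      fun t => (hv t).deriv ▸ hnn _
  exact (tendsto_atTop_ciSup hmono ⟨u₀, forall_mem_range.2 hle⟩).div_atTop tendsto_id

theorem tendsto_div_atTop_of_hasDerivAt_of_periodic_pos {g : ℝ → ℝ} {T : ℝ}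
    (hc : Continuous g) (hg : Function.Periodic g T) (hT : 0 < T) (hpos : ∀ u, 0 < g u)
    {v : ℝ → ℝ} (hv : ∀ t, HasDerivAt v (g (v t)) t) :
    Tendsto (fun t => v t / t) atTop (𝓝 ((T⁻¹ * ∫ s in (0 : ℝ)..T, (g s)⁻¹)⁻¹)) := by
  set G : ℝ → ℝ := fun u => (g u)⁻¹
  have hGc : Continuous G := hc.inv₀ fun u => (hpos u).ne'
  have hGper : Function.Periodic G T := fun u => by simp only [G, hg u]
  set F : ℝ → ℝ := fun w => ∫ s in v 0..w, G s
  have hF : ∀ w, HasDerivAt F (G w) w := fun w => (hGc.integral_hasStrictDerivAt _ w).hasDerivAt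
  -- separation of variables
  have hFv : ∀ t, F (v t) = t := by
    have hderiv : ∀ t, HasDerivAt (F ∘ v - id) 0 t := fun t => by
      simpa [G, inv_mul_cancel₀ (hpos (v t)).ne'] using
        ((hF (v t)).comp t (hv t)).sub (hasDerivAt_id t)
    intro t
    have := is_const_of_deriv_eq_zero (fun t => (hderiv t).differentiableAt)
      (fun t => (hderiv t).deriv) t 0
    simpa [F, sub_eq_zero] using this
  have hFmono : Monotone F :=
    monotone_of_deriv_nonneg (fun w => (hF w).differentiableAt)
      fun w => (hF w).deriv ▸ (inv_pos.2 (hpos w)).le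
  have hvtop : Tendsto v atTop atTop :=
    tendsto_atTop.2 fun M => (eventually_gt_atTop (F M)).mono fun t ht =>
      le_of_lt <| lt_of_not_ge fun h => (hFv t ▸ ht).not_ge (hFmono h)
  have hJ : 0 < ∫ s in (0 : ℝ)..T, G s :=
    intervalIntegral.intervalIntegral_pos_of_pos (hGc.intervalIntegrable _ _)
      (fun u => inv_pos.2 (hpos u)) hT
  have := ((hGper.tendsto_intervalIntegral_div_atTop hT.ne' hGc (v 0)).comp hvtop).inv₀
    (div_pos hJ hT).ne'
  rw [← div_eq_inv_mul]
  refine this.congr fun t => ?_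
  simp only [Function.comp_apply, inv_div]
  exact congrArg (v t / ·) (hFv t)

section UnitDirection

variable {E : Type*} [NormedAddCommGroup E] [InnerProductSpace ℝ E] {ξ : E}

theorem HasDerivAt.inner_of_smul_unit (hξ : ‖ξ‖ = 1) {X : ℝ → E} {f t : ℝ}
    (hX : HasDerivAt X (f • ξ) t) : HasDerivAt (fun s => ⟪X s, ξ⟫) f t := by
  simpa [real_inner_smul_left, real_inner_self_eq_norm_sq, hξ] using
    hX.inner ℝ (hasDerivAt_const t ξ)

theorem eq_inner_smul_add_of_hasDerivAt_smul (hξ : ‖ξ‖ = 1) {X : ℝ → E} {f : ℝ → ℝ}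
    (hX : ∀ t, HasDerivAt X (f t • ξ) t) (t : ℝ) :
    X t = ⟪X t, ξ⟫ • ξ + (X 0 - ⟪X 0, ξ⟫ • ξ) := by
  have hderiv : ∀ s, HasDerivAt (X - fun s => ⟪X s, ξ⟫ • ξ) 0 s := fun s => by
    simpa using (hX s).sub ((hX s).inner_of_smul_unit hξ |>.smul_const ξ)
  have := is_const_of_deriv_eq_zero (fun s => (hderiv s).differentiableAt)
    (fun s => (hderiv s).deriv) t 0
  exact sub_eq_iff_eq_add'.1 this

end UnitDirection

theorem tendsto_inv_smul_of_eq_smul_add {E : Type*} [NormedAddCommGroup E] [NormedSpace ℝ E]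
    {X : ℝ → E} {v : ℝ → ℝ} {ξ p : E} {L : ℝ} (hX : ∀ t, X t = v t • ξ + p)
    (hv : Tendsto (fun t => v t / t) atTop (𝓝 L)) :
    Tendsto (fun t => t⁻¹ • X t) atTop (𝓝 (L • ξ)) := by
  have hp : Tendsto (fun t : ℝ => t⁻¹ • p) atTop (𝓝 0) := by
    simpa using (tendsto_inv_atTop_zero (𝕜 := ℝ)).smul_const p
  simpa [hX, smul_add, smul_smul, div_eq_inv_mul] using (hv.smul_const ξ).add hp

/-- Asymptotics of the flow of `b = a ξ` with `a ≥ 0` `C¹` `ℤ^d`-periodic and `ξ` a unit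
vector with `Tξ ∈ ℤ^d` for some `T > 0`: `X(t,x)/t → a*(x) ξ`, where `a*(x)` is the
harmonic mean of `s ↦ a(sξ + Π_{ξ⊥}(x))` over a period if `a` does not vanish on the line
`{uξ + Π_{ξ⊥}(x)}`, and `a*(x) = 0` otherwise. Here `Π_{ξ⊥}(x) = x - (x·ξ)ξ`. -/
theorem stmt16 (d : ℕ) (a : EuclideanSpace ℝ (Fin d) → ℝ)
    (ha : ContDiff ℝ 1 a) (haper : IsZdPeriodic d a) (hapos : ∀ y, 0 ≤ a y)
    (ξ : EuclideanSpace ℝ (Fin d)) (hξ : ‖ξ‖ = 1)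
    (T : ℝ) (hT : 0 < T) (k₀ : Fin d → ℤ) (hTξ : T • ξ = intVec d k₀)
    (X : ℝ → EuclideanSpace ℝ (Fin d) → EuclideanSpace ℝ (Fin d))
    (hX0 : ∀ x, X 0 x = x)
    (hX : ∀ x t, HasDerivAt (fun s => X s x) (a (X t x) • ξ) t) :
    ∀ x : EuclideanSpace ℝ (Fin d),
      ((∀ u : ℝ, a (u • ξ + (x - (⟪x, ξ⟫ : ℝ) • ξ)) ≠ 0) →
        Tendsto (fun t : ℝ => t⁻¹ • X t x) atTop
          (𝓝 ((T⁻¹ * ∫ s in (0 : ℝ)..T, (a (s • ξ + (x - (⟪x, ξ⟫ : ℝ) • ξ)))⁻¹)⁻¹ • ξ))) ∧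
      ((∃ u : ℝ, a (u • ξ + (x - (⟪x, ξ⟫ : ℝ) • ξ)) = 0) →
        Tendsto (fun t : ℝ => t⁻¹ • X t x) atTop (𝓝 0)) := by
  intro x
  set p := x - ⟪x, ξ⟫ • ξ
  set g : ℝ → ℝ := fun u => a (u • ξ + p)
  have hline : ∀ t, X t x = ⟪X t x, ξ⟫ • ξ + p := by
    simpa only [hX0] using eq_inner_smul_add_of_hasDerivAt_smul hξ (hX x)
  have hv : ∀ t, HasDerivAt (fun s => ⟪X s x, ξ⟫) (g ⟪X t x, ξ⟫) t := fun t => by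
    simpa only [g, ← hline] using (hX x t).inner_of_smul_unit hξ
  have hgC : ContDiff ℝ 1 g := ha.comp ((contDiff_id.smul contDiff_const).add contDiff_const)
  have hgper : Function.Periodic g T := fun u => by
    simp only [g, add_smul, hTξ, add_right_comm _ (intVec d k₀) p, haper _ k₀]
  refine ⟨fun hne => ?_, fun ⟨u, hu⟩ => ?_⟩
  · exact tendsto_inv_smul_of_eq_smul_add hline <|
      tendsto_div_atTop_of_hasDerivAt_of_periodic_pos hgC.continuous hgper hT
        (fun u => (hapos _).lt_of_ne' (hne u)) hv
  · simpa using tendsto_inv_smul_of_eq_smul_add hline <|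
      tendsto_div_atTop_zero_of_hasDerivAt_of_periodic hgC hgper hT (fun _ => hapos _) hu hv
end
end
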